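/- arXiv:2405.09424 — 3 statements merged into one kernel-verified Lean document; each statement's English description precedes it below -/
import Mathlib

section
/- Let $p>0$, $C_3>0$, $\varrho>0$. Suppose $(g_n)$ and $(\Upsilon_n)$ are real sequences and $(E_n)$ positive reals satisfying $g_n = \Upsilon_n/E_n$, $1/E_n \le C_3\lambda_n^2$ for positive reals $\lambda_n$, $\sum_n \Upsilon_n^2 < \infty$, and $\sum_n \lambda_n^{2p} g_n^2 \le \varrho^2$. Then $\left(\sum_n g_n^2\right)^{1/2} \le C_3^{p/(p+2)}\,\varrho^{2/(p+2)}\left(\sum_n \Upsilon_n^2\right)^{p/(2(p+2))}$. -/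
open Real

theorem stmt_6 (p C3 ρ : ℝ) (hp : 0 < p) (hC3 : 0 < C3) (hρ : 0 < ρ)
    (g Υ E lam : ℕ → ℝ) (hE : ∀ n, 0 < E n) (hlam : ∀ n, 0 < lam n)
    (hg : ∀ n, g n = Υ n / E n)
    (hEbound : ∀ n, 1 / E n ≤ C3 * lam n ^ 2)
    (hΥ : Summable (fun n => Υ n ^ 2))
    (hball : ∑' n : ℕ, lam n ^ (2 * p) * g n ^ 2 ≤ ρ ^ 2)
    (hballsum : Summable (fun n => lam n ^ (2 * p) * g n ^ 2)) :
    (∑' n : ℕ, g n ^ 2) ^ ((1 : ℝ) / 2) ≤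
      C3 ^ (p / (p + 2)) * ρ ^ (2 / (p + 2)) *
        (∑' n : ℕ, Υ n ^ 2) ^ (p / (2 * (p + 2))) := by
  have hp2 : (0:ℝ) < p + 2 := by linarith
  set s : ℝ := 2 / (p + 2) with hs
  set t : ℝ := p / (p + 2) with ht
  have hst : s + t = 1 := by rw [hs, ht, ← add_div, add_comm (2:ℝ) p, div_self hp2.ne']
  have hs0 : 0 < s := by positivity
  have ht0 : 0 < t := by positivity
  set a : ℕ → ℝ := fun n => lam n ^ (2 * p) * g n ^ 2 with ha
  set b : ℕ → ℝ := fun n => C3 ^ 2 * Υ n ^ 2 with hb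
  have ha0 : ∀ n, 0 ≤ a n := fun n => by
    have := (hlam n).le
    positivity
  have hb0 : ∀ n, 0 ≤ b n := fun n => by positivity
  -- pointwise bound g² ≤ λ⁴ b
  have hgb : ∀ n, g n ^ 2 ≤ lam n ^ (4:ℝ) * b n := by
    intro n
    have h1 : |g n| ≤ C3 * lam n ^ 2 * |Υ n| := by
      rw [hg n, abs_div, abs_of_pos (hE n), div_eq_mul_inv, mul_comm]
      refine mul_le_mul_of_nonneg_right ?_ (abs_nonneg _)
      calc (E n)⁻¹ = 1 / E n := by rw [one_div]
        _ ≤ C3 * lam n ^ 2 := hEbound n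
    have h2 : g n ^ 2 ≤ (C3 * lam n ^ 2 * |Υ n|) ^ 2 := by
      rw [← sq_abs (g n)]
      exact pow_le_pow_left₀ (abs_nonneg _) h1 2
    calc g n ^ 2 ≤ (C3 * lam n ^ 2 * |Υ n|) ^ 2 := h2
      _ = lam n ^ (4:ℝ) * b n := by
          rw [show ((4:ℝ)) = ((4:ℕ):ℝ) by norm_num, rpow_natCast]
          rw [hb, mul_pow, mul_pow, sq_abs]
          ring
  -- pointwise interpolation: g² ≤ aⁿ^s * bⁿ^t
  have key : ∀ n, g n ^ 2 ≤ a n ^ s * b n ^ t := by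
    intro n
    rcases eq_or_ne (g n) 0 with h0 | h0
    · rw [h0]
      have h4 : ((0:ℝ)) ^ 2 = 0 := by norm_num
      rw [h4]
      exact mul_nonneg (rpow_nonneg (ha0 n) _) (rpow_nonneg (hb0 n) _)
    · have hG2 : 0 < g n ^ 2 := by positivity
      have hL := hlam n
      have hbt : g n ^ 2 ≤ lam n ^ (4:ℝ) * b n := hgb n
      have h1 : (g n ^ 2) ^ t ≤ (lam n ^ (4:ℝ)) ^ t * b n ^ t := by
        rw [← mul_rpow (by positivity) (hb0 n)]
        exact rpow_le_rpow hG2.le hbt ht0.le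
      have h2 : g n ^ 2 = (g n ^ 2) ^ s * (g n ^ 2) ^ t := by
        rw [← rpow_add hG2, hst, rpow_one]
      have h3 : a n ^ s = lam n ^ (2 * p * s) * (g n ^ 2) ^ s := by
        rw [ha, mul_rpow (by positivity) hG2.le, ← rpow_mul hL.le]
      have h4 : (lam n ^ (4:ℝ)) ^ t = lam n ^ (2 * p * s) := by
        rw [← rpow_mul hL.le]
        congr 1
        rw [hs, ht]
        field_simp
        ring
      calc g n ^ 2 = (g n ^ 2) ^ s * (g n ^ 2) ^ t := h2
        _ ≤ (g n ^ 2) ^ s * ((lam n ^ (4:ℝ)) ^ t * b n ^ t) :=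
            mul_le_mul_of_nonneg_left h1 (rpow_nonneg hG2.le s)
        _ = a n ^ s * b n ^ t := by rw [h4, h3]; ring
  -- conjugate exponents
  have hP : ((p+2)/2 : ℝ).HolderConjugate ((p+2)/p) := by
    rw [Real.holderConjugate_iff]
    constructor
    · rw [lt_div_iff₀ (by norm_num : (0:ℝ) < 2)]; linarith
    · rw [inv_div, inv_div, ← add_div, add_comm (2:ℝ) p, div_self hp2.ne']
  have hsP : s * ((p+2)/2) = 1 := by rw [hs]; field_simp
  have htQ : t * ((p+2)/p) = 1 := by rw [ht]; field_simp
  have hfs : Summable (fun n => (a n ^ s) ^ ((p+2)/2)) := by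
    have heq : ∀ n, (a n ^ s) ^ ((p+2)/2) = a n := by
      intro n
      rw [← rpow_mul (ha0 n), hsP, rpow_one]
    simpa only [heq] using hballsum
  have hbsum : Summable b := (hΥ.mul_left (C3 ^ 2))
  have hgs' : Summable (fun n => (b n ^ t) ^ ((p+2)/p)) := by
    have heq : ∀ n, (b n ^ t) ^ ((p+2)/p) = b n := by
      intro n
      rw [← rpow_mul (hb0 n), htQ, rpow_one]
    simpa only [heq] using hbsum
  have hnn1 : ∀ n, 0 ≤ a n ^ s := fun n => rpow_nonneg (ha0 n) _
  have hnn2 : ∀ n, 0 ≤ b n ^ t := fun n => rpow_nonneg (hb0 n) _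
  have hsum_fg := summable_mul_of_Lp_Lq_of_nonneg hP hnn1 hnn2 hfs hgs'
  have hholder :=
    inner_le_Lp_mul_Lq_tsum_of_nonneg hP hnn1 hnn2 hfs hgs'
  -- rewrite Hölder in terms of a, b
  have hAeq : ∑' n, (a n ^ s) ^ ((p+2)/2) = ∑' n, a n := by
    congr 1; ext n; rw [← rpow_mul (ha0 n), hsP, rpow_one]
  have hBeq : ∑' n, (b n ^ t) ^ ((p+2)/p) = ∑' n, b n := by
    congr 1; ext n; rw [← rpow_mul (hb0 n), htQ, rpow_one]
  have hholder' : ∑' n, a n ^ s * b n ^ t ≤ (∑' n, a n) ^ s * (∑' n, b n) ^ t := by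
    have h1 : (1:ℝ) / ((p+2)/2) = s := by rw [hs]; field_simp
    have h2 : (1:ℝ) / ((p+2)/p) = t := by rw [ht]; field_simp
    rw [hAeq, hBeq, h1, h2] at hholder
    exact hholder
  -- sum tsum g² ≤ tsum a^s b^t
  have hgsum : Summable (fun n => g n ^ 2) :=
    Summable.of_nonneg_of_le (fun n => sq_nonneg _) key hsum_fg
  have hstep : ∑' n, g n ^ 2 ≤ (∑' n, a n) ^ s * (∑' n, b n) ^ t :=
    le_trans (Summable.tsum_le_tsum key hgsum hsum_fg) hholder'
  -- bound the two factors
  have hA0 : 0 ≤ ∑' n, a n := tsum_nonneg ha0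
  have hAle : (∑' n, a n) ^ s ≤ (ρ ^ 2) ^ s := rpow_le_rpow hA0 hball hs0.le
  have hBval : ∑' n, b n = C3 ^ 2 * ∑' n, Υ n ^ 2 := tsum_mul_left
  have hgfin : ∑' n, g n ^ 2 ≤ (ρ ^ 2) ^ s * (C3 ^ 2 * ∑' n, Υ n ^ 2) ^ t := by
    rw [← hBval]
    calc ∑' n, g n ^ 2 ≤ (∑' n, a n) ^ s * (∑' n, b n) ^ t := hstep
      _ ≤ (ρ ^ 2) ^ s * (∑' n, b n) ^ t :=
          mul_le_mul_of_nonneg_right hAle (rpow_nonneg (tsum_nonneg hb0) t)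
  -- take square roots
  have hU0 : 0 ≤ ∑' n, Υ n ^ 2 := tsum_nonneg (fun n => sq_nonneg _)
  have hg0 : 0 ≤ ∑' n, g n ^ 2 := tsum_nonneg (fun n => sq_nonneg _)
  have hroot : (∑' n, g n ^ 2) ^ ((1:ℝ)/2) ≤
      ((ρ ^ 2) ^ s * (C3 ^ 2 * ∑' n, Υ n ^ 2) ^ t) ^ ((1:ℝ)/2) :=
    rpow_le_rpow hg0 hgfin (by norm_num)
  refine hroot.trans_eq ?_
  have hRHS0 : (0:ℝ) ≤ (ρ ^ 2) ^ s := rpow_nonneg (sq_nonneg _) _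
  rw [mul_rpow hRHS0 (rpow_nonneg (by positivity) t),
    mul_rpow (by positivity : (0:ℝ) ≤ C3 ^ 2) hU0,
    mul_rpow (rpow_nonneg (by positivity) _) (rpow_nonneg hU0 _),
    ← rpow_natCast ρ 2, ← rpow_natCast C3 2,
    ← rpow_mul hρ.le, ← rpow_mul hρ.le, ← rpow_mul hC3.le, ← rpow_mul hC3.le,
    ← rpow_mul hU0]
  have e1 : (2:ℕ) * s * (1/2 : ℝ) = 2 / (p+2) := by
    push_cast; rw [hs]; ring
  have e2 : (2:ℕ) * t * (1/2 : ℝ) = p / (p+2) := by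
    push_cast; rw [ht]; ring
  have e3 : t * (1/2 : ℝ) = p / (2 * (p+2)) := by
    rw [ht, div_mul_div_comm, mul_one]; ring
  rw [e1, e2, e3]
  ring
end

section
/- Let $p>0$, $\varrho,\delta>0$, $C>0$, $\mu>\sqrt{2}$. Suppose $(g_n)$, $(E_n)$, $(\Upsilon_n)$ are sequences with $E_n>0$, $g_n=\Upsilon_n/E_n$, $1/E_n\le C\lambda_n^2$ for positive $\lambda_n$, $\sum_n \lambda_n^{2p}g_n^2\le\varrho^2$, and $\sum_{n=N+1}^\infty \Upsilon_n^2 \le (\mu+\sqrt{2})^2\delta^2$ for some $N\in\mathbb{N}$. Then $\sum_{n=N+1}^\infty g_n^2 \le C^{2p/(p+2)}(\mu+\sqrt 2)^{2p/(p+2)}\,\varrho^{4/(p+2)}\,\delta^{2p/(p+2)}$. -/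
theorem stmt_17 (p ρ δ C μ : ℝ) (hp : 0 < p) (hρ : 0 < ρ) (hδ : 0 < δ)
    (hC : 0 < C) (hμ : Real.sqrt 2 < μ)
    (g E Υ lam : ℕ → ℝ) (hE : ∀ n, 0 < E n) (hlam : ∀ n, 0 < lam n)
    (hg : ∀ n, g n = Υ n / E n)
    (hEbound : ∀ n, 1 / E n ≤ C * lam n ^ 2)
    (hballsum : Summable (fun n => lam n ^ (2 * p) * g n ^ 2))
    (hball : ∑' n : ℕ, lam n ^ (2 * p) * g n ^ 2 ≤ ρ ^ 2)
    (N : ℕ)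
    (htailsum : Summable (fun n => Υ (n + (N + 1)) ^ 2))
    (htail : ∑' n : ℕ, Υ (n + (N + 1)) ^ 2 ≤ (μ + Real.sqrt 2) ^ 2 * δ ^ 2) :
    ∑' n : ℕ, g (n + (N + 1)) ^ 2 ≤
      C ^ (2 * p / (p + 2)) * (μ + Real.sqrt 2) ^ (2 * p / (p + 2)) *
        ρ ^ (4 / (p + 2)) * δ ^ (2 * p / (p + 2)) := by
  set K := N + 1 with hK
  have hp2 : (0:ℝ) < p + 2 := by linarith
  have hμ0 : (0:ℝ) < μ + Real.sqrt 2 := by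
    have := Real.sqrt_nonneg 2; linarith
  set q : ℝ := (p + 2) / 2 with hqdef
  set r : ℝ := (p + 2) / p with hrdef
  have hq0 : (0:ℝ) < q := by positivity
  have hr0 : (0:ℝ) < r := by positivity
  have hpq : q.HolderConjugate r := by
    rw [Real.holderConjugate_iff]; constructor
    · rw [hqdef]; linarith
    · rw [hqdef, hrdef]; field_simp; ring
  have h1q : 1 / q = 2 / (p + 2) := by rw [hqdef, one_div_div]
  have h1r : 1 / r = p / (p + 2) := by rw [hrdef, one_div_div]
  have hsum1 : 1 / q + 1 / r = 1 := by
    rw [one_div, one_div]; simpa using hpq.inv_add_inv_eq_inv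
  set e : ℝ := 2 * p / (p + 2) with hedef
  have he0 : 0 ≤ e := by positivity
  set f : ℕ → ℝ := fun n => (C ^ p * (lam (n + K) ^ (2 * p) * g (n + K) ^ 2)) ^ (1 / q) with hf
  set F : ℕ → ℝ := fun n => (Υ (n + K) ^ 2) ^ (1 / r) with hF
  have hfnn : ∀ n, 0 ≤ f n := fun n =>
    Real.rpow_nonneg (by have := hlam (n + K); positivity) _
  have hFnn : ∀ n, 0 ≤ F n := fun n => Real.rpow_nonneg (by positivity) _
  have hfq : ∀ n, f n ^ q = C ^ p * (lam (n + K) ^ (2 * p) * g (n + K) ^ 2) := by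
    intro n
    simp only [hf]
    rw [← Real.rpow_mul (by have := hlam (n + K); positivity),
      one_div_mul_cancel hq0.ne', Real.rpow_one]
  have hFr : ∀ n, F n ^ r = Υ (n + K) ^ 2 := by
    intro n
    simp only [hF]
    rw [← Real.rpow_mul (by positivity), one_div_mul_cancel hr0.ne', Real.rpow_one]
  have hfq_sum : Summable fun n => f n ^ q := by
    simp only [hfq]
    exact ((summable_nat_add_iff K).mpr hballsum).mul_left _
  have hFr_sum : Summable fun n => F n ^ r := by
    simp only [hFr]; exact htailsum
  -- pointwise bound : g (n+K)^2 ≤ f n * F n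
  have hpoint : ∀ n, g (n + K) ^ 2 ≤ f n * F n := by
    intro n
    set m := n + K with hm
    have hEm := hE m
    have hlm := hlam m
    have hUm : Υ m = g m * E m := by
      rw [hg m]; field_simp
    have ht : (0:ℝ) ≤ g m ^ 2 := sq_nonneg _
    have hFval : F n = (g m ^ 2) ^ (1 / r) * E m ^ e := by
      simp only [hF, ← hm]
      rw [hUm, mul_pow, Real.mul_rpow ht (by positivity),
        ← Real.rpow_natCast (E m) 2, ← Real.rpow_mul hEm.le,
        show ((2:ℕ):ℝ) * (1 / r) = e by rw [h1r, hedef]; push_cast; ring]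
    have hfval : f n = C ^ e * lam m ^ (2 * e) * (g m ^ 2) ^ (1 / q) := by
      simp only [hf, ← hm]
      rw [Real.mul_rpow (by positivity) (by positivity),
        Real.mul_rpow (by positivity) ht,
        ← Real.rpow_mul hC.le, ← Real.rpow_mul hlm.le,
        show 2 * p * (1 / q) = 2 * e by rw [h1q, hedef]; ring,
        show p * (1 / q) = e by rw [h1q, hedef]; ring]
      ring
    have hgt : (g m ^ 2) ^ (1 / q) * (g m ^ 2) ^ (1 / r) = g m ^ 2 := by
      rw [← Real.rpow_add' ht (by rw [hsum1]; norm_num), hsum1, Real.rpow_one]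
    have hcomb : f n * F n = (C ^ e * lam m ^ (2 * e) * E m ^ e) * (g m ^ 2) := by
      calc f n * F n
          = (C ^ e * lam m ^ (2 * e) * E m ^ e) *
            ((g m ^ 2) ^ (1 / q) * (g m ^ 2) ^ (1 / r)) := by rw [hfval, hFval]; ring
        _ = _ := by rw [hgt]
    have h1 : (1:ℝ) ≤ C * lam m ^ 2 * E m := by
      have h2 := hEbound m
      rw [div_le_iff₀ hEm] at h2
      linarith
    have h3 : (1:ℝ) ≤ (C * lam m ^ 2 * E m) ^ e := Real.one_le_rpow h1 he0
    have h4 : (C * lam m ^ 2 * E m) ^ e = C ^ e * lam m ^ (2 * e) * E m ^ e := by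
      rw [Real.mul_rpow (by positivity) hEm.le, Real.mul_rpow hC.le (by positivity),
        ← Real.rpow_natCast (lam m) 2, ← Real.rpow_mul hlm.le,
        show ((2:ℕ):ℝ) * e = 2 * e by push_cast; ring]
    rw [hcomb, ← h4]
    calc g m ^ 2 = 1 * g m ^ 2 := (one_mul _).symm
      _ ≤ (C * lam m ^ 2 * E m) ^ e * g m ^ 2 := by
          exact mul_le_mul_of_nonneg_right h3 ht
  -- Hölder
  obtain ⟨hfF_sum, hfF⟩ :=
    Real.summable_and_inner_le_Lp_mul_Lq_tsum_of_nonneg hpq hfnn hFnn hfq_sum hFr_sum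
  have hgsum : Summable fun n => g (n + K) ^ 2 :=
    Summable.of_nonneg_of_le (fun n => sq_nonneg _) hpoint hfF_sum
  have step1 : ∑' n, g (n + K) ^ 2 ≤ ∑' n, f n * F n :=
    Summable.tsum_le_tsum hpoint hgsum hfF_sum
  -- bound the two factor sums
  have hfq_bound : ∑' n, f n ^ q ≤ C ^ p * ρ ^ 2 := by
    simp only [hfq]
    rw [tsum_mul_left]
    have htail2 : ∑' n, lam (n + K) ^ (2 * p) * g (n + K) ^ 2 ≤ ρ ^ 2 := by
      have heq := Summable.sum_add_tsum_nat_add K hballsum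
      have hpart : 0 ≤ ∑ i ∈ Finset.range K, lam i ^ (2 * p) * g i ^ 2 :=
        Finset.sum_nonneg fun i _ => by have := hlam i; positivity
      linarith
    exact mul_le_mul_of_nonneg_left htail2 (by positivity)
  have hFr_bound : ∑' n, F n ^ r ≤ (μ + Real.sqrt 2) ^ 2 * δ ^ 2 := by
    simp only [hFr]; exact htail
  have step2 : (∑' n, f n ^ q) ^ (1 / q) * (∑' n, F n ^ r) ^ (1 / r) ≤
      (C ^ p * ρ ^ 2) ^ (1 / q) * ((μ + Real.sqrt 2) ^ 2 * δ ^ 2) ^ (1 / r) := by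
    have hA : (∑' n, f n ^ q) ^ (1 / q) ≤ (C ^ p * ρ ^ 2) ^ (1 / q) :=
      Real.rpow_le_rpow (tsum_nonneg fun n => Real.rpow_nonneg (hfnn n) _)
        hfq_bound (one_div_pos.mpr hq0).le
    have hB : (∑' n, F n ^ r) ^ (1 / r) ≤ ((μ + Real.sqrt 2) ^ 2 * δ ^ 2) ^ (1 / r) :=
      Real.rpow_le_rpow (tsum_nonneg fun n => Real.rpow_nonneg (hFnn n) _)
        hFr_bound (one_div_pos.mpr hr0).le
    exact mul_le_mul hA hB
      (Real.rpow_nonneg (tsum_nonneg fun n => Real.rpow_nonneg (hFnn n) _) _)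
      (Real.rpow_nonneg (by positivity) _)
  have hfinal : (C ^ p * ρ ^ 2) ^ (1 / q) * ((μ + Real.sqrt 2) ^ 2 * δ ^ 2) ^ (1 / r) =
      C ^ (2 * p / (p + 2)) * (μ + Real.sqrt 2) ^ (2 * p / (p + 2)) *
        ρ ^ (4 / (p + 2)) * δ ^ (2 * p / (p + 2)) := by
    rw [Real.mul_rpow (by positivity) (by positivity),
      Real.mul_rpow (by positivity) (by positivity),
      ← Real.rpow_mul hC.le,
      ← Real.rpow_natCast ρ 2, ← Real.rpow_mul hρ.le,
      ← Real.rpow_natCast (μ + Real.sqrt 2) 2, ← Real.rpow_mul hμ0.le,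
      ← Real.rpow_natCast δ 2, ← Real.rpow_mul hδ.le, h1q, h1r]
    push_cast
    rw [show p * (2 / (p + 2)) = 2 * p / (p + 2) by ring,
      show (2:ℝ) * (2 / (p + 2)) = 4 / (p + 2) by ring,
      show (2:ℝ) * (p / (p + 2)) = 2 * p / (p + 2) by ring]
    ring
  calc ∑' n, g (n + K) ^ 2 ≤ ∑' n, f n * F n := step1
    _ ≤ (∑' n, f n ^ q) ^ (1 / q) * (∑' n, F n ^ r) ^ (1 / r) := hfF
    _ ≤ (C ^ p * ρ ^ 2) ^ (1 / q) * ((μ + Real.sqrt 2) ^ 2 * δ ^ 2) ^ (1 / r) := step2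
    _ = _ := hfinal
end

section
/- Let $p>0$, $\varrho>0$, $C>0$, $e_1>0$, $d>0$, $\mu>\sqrt 2$, $\delta>0$. Let $(\lambda_n),(g_n),(\Upsilon_n),(E_n)$ be sequences with $\lambda_n\ge e_1 n^{2/d}$, $E_n\le C/\lambda_n^2$, $\Upsilon_n=E_n g_n$, and $\sum_n\lambda_n^{2p}g_n^2\le\varrho^2$. If $N\in\mathbb{N}$ satisfies $\sum_{n=N}^\infty \Upsilon_n^2 \ge (\mu-\sqrt 2)^2\delta^2$, then $N \le \left(\frac{C\varrho}{(\mu-\sqrt 2)\,e_1^{p+2}\,\delta}\right)^{d/(2p+4)}$. -/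
set_option maxHeartbeats 1000000 in
theorem stmt_19 (p ρ C e1 d μ δ : ℝ) (hp : 0 < p) (hρ : 0 < ρ) (hC : 0 < C)
    (he1 : 0 < e1) (hd : 0 < d) (hμ : Real.sqrt 2 < μ) (hδ : 0 < δ)
    (lam g Υ E : ℕ → ℝ) (hlam : ∀ n, 0 < lam n) (hEpos : ∀ n, 0 < E n)
    (hweyl : ∀ n : ℕ, e1 * ((n : ℝ) + 1) ^ (2 / d) ≤ lam n)
    (hEup : ∀ n, E n ≤ C / lam n ^ 2)
    (hΥ : ∀ n, Υ n = E n * g n)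
    (hballsum : Summable (fun n => lam n ^ (2 * p) * g n ^ 2))
    (hball : ∑' n : ℕ, lam n ^ (2 * p) * g n ^ 2 ≤ ρ ^ 2)
    (N : ℕ) (hN : 1 ≤ N)
    (hdisc : (μ - Real.sqrt 2) ^ 2 * δ ^ 2 ≤ ∑' n : ℕ, Υ (n + N) ^ 2) :
    (N : ℝ) ≤ (C * ρ / ((μ - Real.sqrt 2) * e1 ^ (p + 2) * δ)) ^ (d / (2 * p + 4)) := by
  set s := μ - Real.sqrt 2 with hs
  have hspos : 0 < s := sub_pos.2 hμ
  have hNpos : (0:ℝ) < (N:ℝ) := by exact_mod_cast hN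
  set L := e1 * (N:ℝ) ^ (2/d) with hL
  have hLpos : 0 < L := mul_pos he1 (Real.rpow_pos_of_pos hNpos _)
  have hlamL : ∀ n : ℕ, L ≤ lam (n + N) := by
    intro n
    refine le_trans ?_ (hweyl (n+N))
    apply mul_le_mul_of_nonneg_left ?_ he1.le
    apply Real.rpow_le_rpow hNpos.le ?_ (by positivity)
    push_cast
    linarith [Nat.cast_nonneg (α := ℝ) n]
  -- pointwise bound
  have key : ∀ n : ℕ, Υ (n + N) ^ 2 ≤
      C^2 / L ^ (2*p+4) * (lam (n+N) ^ (2*p) * g (n+N) ^ 2) := by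
    intro n
    have hl := hlam (n+N)
    have hE := hEpos (n+N)
    have hEu := hEup (n+N)
    rw [hΥ, mul_pow]
    have h1 : E (n+N) ^ 2 ≤ (C / lam (n+N)^2) ^ 2 :=
      pow_le_pow_left₀ hE.le hEu 2
    have h2 : (C / lam (n+N)^2) ^ 2 * g (n+N) ^ 2 =
        C^2 / lam (n+N) ^ (2*p+4) * (lam (n+N) ^ (2*p) * g (n+N) ^ 2) := by
      have h4 : lam (n+N) ^ (2*p+4) = lam (n+N) ^ (2*p) * lam (n+N) ^ 4 := by
        rw [Real.rpow_add hl, show (4:ℝ) = ((4:ℕ):ℝ) by norm_num, Real.rpow_natCast]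
      rw [h4]
      have hrp : (0:ℝ) < lam (n+N) ^ (2*p) := Real.rpow_pos_of_pos hl _
      field_simp
    have h3 : C^2 / lam (n+N) ^ (2*p+4) * (lam (n+N) ^ (2*p) * g (n+N) ^ 2) ≤
        C^2 / L ^ (2*p+4) * (lam (n+N) ^ (2*p) * g (n+N) ^ 2) := by
      have : L ^ (2*p+4) ≤ lam (n+N) ^ (2*p+4) :=
        Real.rpow_le_rpow hLpos.le (hlamL n) (by linarith)
      have hrpL : (0:ℝ) < L ^ (2*p+4) := Real.rpow_pos_of_pos hLpos _
      have hg : (0:ℝ) ≤ lam (n+N) ^ (2*p) * g (n+N) ^ 2 := by positivity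
      gcongr
    calc E (n+N)^2 * g (n+N)^2 ≤ (C / lam (n+N)^2) ^ 2 * g (n+N) ^ 2 :=
          mul_le_mul_of_nonneg_right h1 (sq_nonneg _)
      _ = C^2 / lam (n+N) ^ (2*p+4) * (lam (n+N) ^ (2*p) * g (n+N) ^ 2) := h2
      _ ≤ _ := h3
  have hsum2 : Summable (fun n => lam (n+N) ^ (2*p) * g (n+N) ^ 2) :=
    (summable_nat_add_iff N).2 hballsum
  have hsum3 : Summable (fun n => C^2 / L ^ (2*p+4) * (lam (n+N) ^ (2*p) * g (n+N) ^ 2)) :=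
    hsum2.mul_left _
  have hsumΥ : Summable (fun n => Υ (n+N) ^ 2) :=
    Summable.of_nonneg_of_le (fun n => sq_nonneg _) key hsum3
  have hshift : ∑' n : ℕ, lam (n+N) ^ (2*p) * g (n+N) ^ 2 ≤ ρ ^ 2 := by
    have h := Summable.sum_add_tsum_nat_add N hballsum
    have hfin : (0:ℝ) ≤ ∑ i ∈ Finset.range N, lam i ^ (2*p) * g i ^ 2 := by
      apply Finset.sum_nonneg
      intro i _
      exact mul_nonneg (Real.rpow_nonneg (hlam i).le _) (sq_nonneg _)
    linarith
  have hmain : s^2 * δ^2 ≤ C^2 / L ^ (2*p+4) * ρ^2 := by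
    calc s^2 * δ^2 ≤ ∑' n : ℕ, Υ (n + N) ^ 2 := hdisc
      _ ≤ ∑' n : ℕ, C^2 / L ^ (2*p+4) * (lam (n+N) ^ (2*p) * g (n+N) ^ 2) :=
          Summable.tsum_le_tsum key hsumΥ hsum3
      _ = C^2 / L ^ (2*p+4) * ∑' n : ℕ, lam (n+N) ^ (2*p) * g (n+N) ^ 2 :=
          tsum_mul_left
      _ ≤ C^2 / L ^ (2*p+4) * ρ^2 := by
          have : (0:ℝ) ≤ C^2 / L ^ (2*p+4) := by positivity
          exact mul_le_mul_of_nonneg_left hshift this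
  -- take square roots
  have hLp : (0:ℝ) < L ^ (p+2) := Real.rpow_pos_of_pos hLpos _
  have hsq : (s * δ)^2 ≤ (C * ρ / L ^ (p+2))^2 := by
    have hL2 : L ^ (2*p+4) = (L ^ (p+2))^2 := by
      rw [pow_two, ← Real.rpow_add hLpos]
      ring_nf
    calc (s*δ)^2 = s^2 * δ^2 := by ring
      _ ≤ C^2 / L ^ (2*p+4) * ρ^2 := hmain
      _ = (C * ρ / L ^ (p+2))^2 := by rw [hL2]; field_simp
  have hsd : s * δ ≤ C * ρ / L ^ (p+2) := by
    have h1 : 0 ≤ s * δ := by positivity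
    have h2 : 0 ≤ C * ρ / L ^ (p+2) := by positivity
    exact (pow_le_pow_iff_left₀ h1 h2 (by norm_num)).1 hsq
  have hNexp : (N:ℝ) ^ ((2*p+4)/d) ≤ C * ρ / (s * e1 ^ (p+2) * δ) := by
    have hLexp : L ^ (p+2) = e1 ^ (p+2) * (N:ℝ) ^ ((2*p+4)/d) := by
      rw [hL, Real.mul_rpow he1.le (by positivity), ← Real.rpow_mul hNpos.le]
      congr 1
      field_simp
      ring
    have h1 : L ^ (p+2) * (s * δ) ≤ C * ρ := by
      have := mul_le_mul_of_nonneg_left hsd hLp.le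
      rwa [mul_div_cancel₀ _ (ne_of_gt hLp)] at this
    rw [hLexp] at h1
    rw [le_div_iff₀ (by positivity)]
    calc (N:ℝ) ^ ((2*p+4)/d) * (s * e1 ^ (p+2) * δ)
        = e1 ^ (p+2) * (N:ℝ) ^ ((2*p+4)/d) * (s * δ) := by ring
      _ ≤ C * ρ := h1
  have hfinal := Real.rpow_le_rpow (by positivity) hNexp (le_of_lt (by positivity : (0:ℝ) < d / (2*p+4)))
  rw [← Real.rpow_mul hNpos.le] at hfinal
  have hexp1 : (2*p+4)/d * (d/(2*p+4)) = 1 := by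
    field_simp
  rw [hexp1, Real.rpow_one] at hfinal
  exact hfinal
end
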